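/- For CDFs F, G of non-negative random variables and u_θ(x) = x^θ, define 𝓘^θ_H(x) = ∫₀^x H(t) d u_θ(t). Then 𝓘^θ_H(x)/u_θ(x) = H(x) − ∫₀^{H(x)} (H^{-1}(y)/x)^θ dy, and as θ → ∞, 𝓘^θ_H(x)/u_θ(x) → H(x) pointwise for x with H continuous at x and H^{-1}(y) < x for a.e. y < H(x). -/

import Mathlib

open MeasureTheory Set Filter

/-- The left-continuous quantile function `H⁻¹(y) = inf {t : H t ≥ y}`. -/
noncomputable def quantile (H : ℝ → ℝ) (y : ℝ) : ℝ := sInf {t : ℝ | y ≤ H t}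

/-- `𝓘^θ_H(x) = ∫₀ˣ H(t) d u_θ(t)` with `u_θ(t) = t^θ`, i.e. `∫₀ˣ H(t)·θ t^(θ-1) dt`. -/
noncomputable def Itheta (H : ℝ → ℝ) (θ : ℝ) (x : ℝ) : ℝ :=
  ∫ t in (0:ℝ)..x, H t * (θ * t ^ (θ - 1))

section aux
variable {H : ℝ → ℝ}

lemma mem_nonneg (hnn : ∀ t < (0:ℝ), H t = 0) {y t : ℝ} (hy : 0 < y)
    (ht : t ∈ {t : ℝ | y ≤ H t}) : 0 ≤ t := by
  by_contra h
  push_neg at h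
  rw [mem_setOf_eq, hnn t h] at ht
  linarith

lemma quantile_nonneg (hnn : ∀ t < (0:ℝ), H t = 0) {y : ℝ} (hy : 0 < y) :
    0 ≤ quantile H y :=
  Real.sInf_nonneg fun _ ht => mem_nonneg hnn hy ht

lemma quantile_bddBelow (hnn : ∀ t < (0:ℝ), H t = 0) {y : ℝ} (hy : 0 < y) :
    BddBelow {t : ℝ | y ≤ H t} :=
  ⟨0, fun _ ht => mem_nonneg hnn hy ht⟩

lemma quantile_le (hnn : ∀ t < (0:ℝ), H t = 0) {y x : ℝ} (hy : 0 < y) (h : y ≤ H x) :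
    quantile H y ≤ x :=
  csInf_le (quantile_bddBelow hnn hy) h

lemma lt_quantile_iff (hmono : Monotone H) (hcont : Continuous H)
    (hnn : ∀ t < (0:ℝ), H t = 0) {y x : ℝ} (hy : 0 < y) (hyx : y ≤ H x) (t : ℝ) :
    t < quantile H y ↔ H t < y := by
  constructor
  · intro h
    by_contra hc
    push_neg at hc
    exact absurd (csInf_le (quantile_bddBelow hnn hy) hc) (not_le.2 h)
  · intro h
    have hopen : IsOpen {s : ℝ | H s < y} := isOpen_lt hcont continuous_const
    obtain ⟨ε, hε, hball⟩ := Metric.isOpen_iff.1 hopen t h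
    have ht' : H (t + ε / 2) < y := by
      apply hball
      rw [Metric.mem_ball, Real.dist_eq, show t + ε / 2 - t = ε / 2 by ring,
        abs_of_nonneg (by linarith : (0:ℝ) ≤ ε/2)]
      linarith
    have hlb : ∀ s ∈ {u : ℝ | y ≤ H u}, t + ε / 2 ≤ s := by
      intro s hs
      by_contra hc
      push_neg at hc
      exact absurd (le_trans hs (hmono hc.le)) (not_le.2 ht')
    calc t < t + ε / 2 := by linarith
      _ ≤ quantile H y := le_csInf ⟨x, hyx⟩ hlb
end aux

lemma integral_g {θ : ℝ} (hθ : 1 ≤ θ) {a : ℝ} (ha : 0 ≤ a) :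
    ∫ t in Ioo (0:ℝ) a, θ * t ^ (θ - 1) = a ^ θ := by
  rw [← integral_Ioc_eq_integral_Ioo, ← intervalIntegral.integral_of_le ha,
    intervalIntegral.integral_const_mul, integral_rpow (Or.inl (by linarith)),
    show θ - 1 + 1 = θ by ring, Real.zero_rpow (by linarith : θ ≠ 0)]
  field_simp
  simp

lemma key (H : ℝ → ℝ) (hmono : Monotone H) (hcont : Continuous H)
    (hnn : ∀ t < (0:ℝ), H t = 0) (h01 : ∀ t, 0 ≤ H t ∧ H t ≤ 1)
    (x : ℝ) (hx : 0 < x) (θ : ℝ) (hθ : 1 ≤ θ) :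
    Itheta H θ x = H x * x ^ θ - ∫ y in Ioo (0:ℝ) (H x), (quantile H y) ^ θ := by
  have hθ0 : 0 < θ := by linarith
  have hθ1 : (0:ℝ) ≤ θ - 1 := by linarith
  set c := H x with hc_def
  have hc : 0 ≤ c := (h01 x).1
  set μ := volume.restrict (Ioo (0:ℝ) x) with hμ
  set ν := volume.restrict (Ioo (0:ℝ) c) with hν
  set g : ℝ → ℝ := fun t => θ * t ^ (θ - 1) with hg
  have hg_cont : Continuous g := continuous_const.mul (Real.continuous_rpow_const hθ1)
  set s : Set (ℝ × ℝ) := {p : ℝ × ℝ | H p.1 < p.2} with hs_def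
  have hs : MeasurableSet s :=
    measurableSet_lt (hcont.comp continuous_fst).measurable measurable_snd
  set F : ℝ × ℝ → ℝ := s.indicator (fun p => g p.1) with hF
  have hFmeas : Measurable F := ((hg_cont.measurable).comp measurable_fst).indicator hs
  have hFint : Integrable F (μ.prod ν) := by
    refine Integrable.mono' (integrable_const (θ * x ^ (θ - 1))) hFmeas.aestronglyMeasurable ?_
    rw [hμ, hν, Measure.prod_restrict]
    filter_upwards [ae_restrict_mem (measurableSet_Ioo.prod measurableSet_Ioo)] with p hp
    have h1 : p.1 ∈ Ioo (0:ℝ) x := hp.1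
    have hb : ‖g p.1‖ ≤ θ * x ^ (θ - 1) := by
      have h2 : g p.1 = θ * p.1 ^ (θ - 1) := rfl
      rw [Real.norm_eq_abs, h2,
        abs_of_nonneg (mul_nonneg hθ0.le (Real.rpow_nonneg h1.1.le _))]
      exact mul_le_mul_of_nonneg_left (Real.rpow_le_rpow h1.1.le h1.2.le hθ1) hθ0.le
    by_cases h : p ∈ s
    · rwa [hF, indicator_of_mem h]
    · rw [hF, indicator_of_notMem h]
      simp only [norm_zero]
      positivity
  have hA : ∀ t ∈ Ioo (0:ℝ) x, (∫ y, F (t, y) ∂ν) = (c - H t) * g t := by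
    intro t ht
    have h0t : 0 ≤ H t := (h01 t).1
    have htc : H t ≤ c := hmono ht.2.le
    have heq : (fun y => F (t, y)) = (Ioi (H t)).indicator (fun _ => g t) := by
      ext y
      by_cases h : H t < y
      · rw [hF, indicator_of_mem (by exact h), indicator_of_mem (by exact h)]
      · rw [hF, indicator_of_notMem (by exact h), indicator_of_notMem (by exact h)]
    rw [heq, hν, integral_indicator measurableSet_Ioi,
      Measure.restrict_restrict measurableSet_Ioi]
    have hset : Ioi (H t) ∩ Ioo 0 c = Ioo (H t) c := by
      ext y
      simp only [mem_inter_iff, mem_Ioi, mem_Ioo]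
      constructor
      · rintro ⟨h1, _, h3⟩; exact ⟨h1, h3⟩
      · rintro ⟨h1, h2⟩; exact ⟨h1, lt_of_le_of_lt h0t h1, h2⟩
    rw [hset, setIntegral_const, Real.volume_real_Ioo_of_le htc]
    simp [smul_eq_mul]
  have hB : ∀ y ∈ Ioo (0:ℝ) c, (∫ t, F (t, y) ∂μ) = (quantile H y) ^ θ := by
    intro y hy
    have hq0 : 0 ≤ quantile H y := quantile_nonneg hnn hy.1
    have hqx : quantile H y ≤ x := quantile_le hnn hy.1 hy.2.le
    have heq : (fun t => F (t, y)) = ({t : ℝ | H t < y}).indicator g := by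
      ext t
      by_cases h : H t < y
      · rw [hF, indicator_of_mem (by exact h), indicator_of_mem (by exact h)]
      · rw [hF, indicator_of_notMem (by exact h), indicator_of_notMem (by exact h)]
    have hsopen : MeasurableSet {t : ℝ | H t < y} :=
      (isOpen_lt hcont continuous_const).measurableSet
    rw [heq, hμ, integral_indicator hsopen, Measure.restrict_restrict hsopen]
    have hset : {t : ℝ | H t < y} ∩ Ioo 0 x = Ioo 0 (quantile H y) := by
      ext t
      simp only [mem_inter_iff, mem_setOf_eq, mem_Ioo]
      rw [← lt_quantile_iff hmono hcont hnn hy.1 hy.2.le t]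
      constructor
      · rintro ⟨h1, h2, _⟩; exact ⟨h2, h1⟩
      · rintro ⟨h1, h2⟩; exact ⟨h2, h1, lt_of_lt_of_le h2 hqx⟩
    rw [hset, integral_g hθ hq0]
  have swap : (∫ t, (∫ y, F (t, y) ∂ν) ∂μ) = ∫ y, (∫ t, F (t, y) ∂μ) ∂ν :=
    integral_integral_swap hFint
  have L1 : (∫ t, (∫ y, F (t, y) ∂ν) ∂μ) = ∫ t in Ioo (0:ℝ) x, (c - H t) * g t :=
    setIntegral_congr_fun measurableSet_Ioo hA
  have L2 : (∫ y, (∫ t, F (t, y) ∂μ) ∂ν) = ∫ y in Ioo (0:ℝ) c, (quantile H y) ^ θ :=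
    setIntegral_congr_fun measurableSet_Ioo hB
  have hInt_g : IntegrableOn g (Ioo 0 x) :=
    (hg_cont.integrableOn_Icc (a := 0) (b := x)).mono_set Ioo_subset_Icc_self
  have hInt_Hg : IntegrableOn (fun t => H t * g t) (Ioo 0 x) :=
    (((hcont.mul hg_cont).integrableOn_Icc (a := 0) (b := x)).mono_set Ioo_subset_Icc_self)
  have L3 : ∫ t in Ioo (0:ℝ) x, (c - H t) * g t = c * x ^ θ - Itheta H θ x := by
    have hpt : ∀ t, (c - H t) * g t = c * g t - H t * g t := fun t => by ring
    simp_rw [hpt]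
    rw [integral_sub (hInt_g.const_mul c) hInt_Hg, integral_const_mul, integral_g hθ hx.le]
    congr 1
    rw [Itheta, intervalIntegral.integral_of_le hx.le, integral_Ioc_eq_integral_Ioo]
  rw [L1, L3] at swap
  rw [L2] at swap
  linarith

/-- `𝓘^θ_H(x)/x^θ = H(x) − ∫₀^{H(x)} (H⁻¹(y)/x)^θ dy`, and, provided `H⁻¹(y) < x` for
a.e. `y < H(x)`, `𝓘^θ_H(x)/x^θ → H(x)` as `θ → ∞`. -/
theorem stmt17 (H : ℝ → ℝ) (hmono : Monotone H) (hcont : Continuous H)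
    (hnn : ∀ t < (0:ℝ), H t = 0) (h01 : ∀ t, 0 ≤ H t ∧ H t ≤ 1)
    (x : ℝ) (hx : 0 < x)
    (hae : ∀ᵐ y ∂(volume.restrict (Ioo (0:ℝ) (H x))), quantile H y < x) :
    (∀ θ : ℝ, 1 ≤ θ →
      Itheta H θ x / x ^ θ = H x - ∫ y in (0:ℝ)..(H x), (quantile H y / x) ^ θ) ∧
    Tendsto (fun θ : ℝ => Itheta H θ x / x ^ θ) atTop (nhds (H x)) := by
  have hc : (0:ℝ) ≤ H x := (h01 x).1
  have hxθ : ∀ θ : ℝ, (0:ℝ) < x ^ θ := fun θ => Real.rpow_pos_of_pos hx θ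
  -- conversion of the interval integral to a set integral over Ioo
  have hIv : ∀ θ : ℝ, (∫ y in (0:ℝ)..(H x), (quantile H y / x) ^ θ)
      = ∫ y in Ioo (0:ℝ) (H x), (quantile H y / x) ^ θ := fun θ => by
    rw [intervalIntegral.integral_of_le hc, integral_Ioc_eq_integral_Ioo]
  have part1 : ∀ θ : ℝ, 1 ≤ θ →
      Itheta H θ x / x ^ θ = H x - ∫ y in (0:ℝ)..(H x), (quantile H y / x) ^ θ := by
    intro θ hθ
    have e1 : (∫ y in Ioo (0:ℝ) (H x), (quantile H y / x) ^ θ)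
        = ∫ y in Ioo (0:ℝ) (H x), (quantile H y) ^ θ / x ^ θ :=
      setIntegral_congr_fun measurableSet_Ioo
        (fun y hy => Real.div_rpow (quantile_nonneg hnn hy.1) hx.le θ)
    rw [key H hmono hcont hnn h01 x hx θ hθ, hIv θ, e1, integral_div, sub_div,
      mul_div_cancel_right₀ _ (hxθ θ).ne']
  refine ⟨part1, ?_⟩
  -- measurable monotone version of the quantile on the relevant range
  set Q : ℝ → ℝ := fun y => quantile H (min y (H x)) with hQ
  have hQmono : Monotone Q := by
    intro y₁ y₂ h12
    have hz12 : min y₁ (H x) ≤ min y₂ (H x) := min_le_min h12 le_rfl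
    by_cases h1 : 0 < min y₁ (H x)
    · refine csInf_le_csInf (quantile_bddBelow hnn h1) ⟨x, show min y₂ (H x) ≤ H x from min_le_right _ _⟩ ?_
      intro t ht
      exact le_trans hz12 ht
    · push_neg at h1
      have hq1 : Q y₁ = 0 := by
        have : {t : ℝ | min y₁ (H x) ≤ H t} = univ :=
          eq_univ_of_forall fun t => le_trans h1 (h01 t).1
      -- sInf univ = 0 for ℝ
        rw [hQ]
        simp only [quantile, this]
        exact Real.sInf_of_not_bddBelow (by simpa using not_bddBelow_univ)
      rw [hq1]
      by_cases h2 : 0 < min y₂ (H x)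
      · exact quantile_nonneg hnn h2
      · push_neg at h2
        have : {t : ℝ | min y₂ (H x) ≤ H t} = univ :=
          eq_univ_of_forall fun t => le_trans h2 (h01 t).1
        rw [hQ]
        simp only [quantile, this]
        exact le_of_eq (Real.sInf_of_not_bddBelow (by simpa using not_bddBelow_univ)).symm
  have hQmeas : Measurable Q := hQmono.measurable
  have hQeq : ∀ y ∈ Ioo (0:ℝ) (H x), Q y = quantile H y := by
    intro y hy
    rw [hQ]
    simp [min_eq_left hy.2.le]
  have hDCT : Tendsto (fun θ : ℝ => ∫ y in Ioo (0:ℝ) (H x), (quantile H y / x) ^ θ)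
      atTop (nhds 0) := by
    have hDCT' : Tendsto (fun θ : ℝ => ∫ y in Ioo (0:ℝ) (H x), (quantile H y / x) ^ θ)
        atTop (nhds (∫ _ in Ioo (0:ℝ) (H x), (0:ℝ))) := by
      apply tendsto_integral_filter_of_dominated_convergence (fun _ => (1:ℝ))
      · filter_upwards with θ
        refine AEStronglyMeasurable.congr
          (((hQmeas.div_const x).pow_const θ).aestronglyMeasurable
            (μ := volume.restrict (Ioo (0:ℝ) (H x)))) ?_
        filter_upwards [ae_restrict_mem measurableSet_Ioo] with y hy
        rw [hQeq y hy]
      · filter_upwards [eventually_ge_atTop (1:ℝ)] with θ hθ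
        filter_upwards [ae_restrict_mem measurableSet_Ioo] with y hy
        have hq0 : 0 ≤ quantile H y := quantile_nonneg hnn hy.1
        have hqx : quantile H y ≤ x := quantile_le hnn hy.1 hy.2.le
        rw [Real.norm_eq_abs, abs_of_nonneg (Real.rpow_nonneg (by positivity) θ)]
        exact Real.rpow_le_one (by positivity) ((div_le_one hx).2 hqx) (by linarith)
      · exact integrable_const 1
      · filter_upwards [hae, ae_restrict_mem measurableSet_Ioo] with y hqlt hy
        have hq0 : 0 ≤ quantile H y := quantile_nonneg hnn hy.1
        have hb0 : (0:ℝ) ≤ quantile H y / x := by positivity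
        exact tendsto_rpow_atTop_of_base_lt_one _ (lt_of_lt_of_le neg_one_lt_zero hb0)
          ((div_lt_one hx).2 hqlt)
    simpa using hDCT'
  have h2 : Tendsto (fun θ : ℝ => H x - ∫ y in Ioo (0:ℝ) (H x), (quantile H y / x) ^ θ)
      atTop (nhds (H x)) := by
    simpa using tendsto_const_nhds.sub hDCT
  refine Tendsto.congr' ?_ h2
  filter_upwards [eventually_ge_atTop (1:ℝ)] with θ hθ
  rw [part1 θ hθ, hIv θ]
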